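/- Let n ≥ 3. Every separating union-closed family of subsets of [n] = {1,...,n} with exactly n+1 members has weight at least n(n−1)/2 + 1, and this bound is attained: the family T_n ∪ {∅} ∪ {{n−1}}, where T_n = { {k,...,n} : 2 ≤ k ≤ n }, is a separating union-closed family on [n] of size n+1 with weight exactly n(n−1)/2 + 1. -/

import Mathlib

/-!
For a union-closed family `S` separating the points of `U`, let `f i` be the largest member of `S`
avoiding `i`. A member of `S` avoids `i` exactly when it lies below `f i`, and separation makes `f`
injective on `U`. Counting, for each `i ∈ U`, the members avoiding `i` therefore gives
`|U| |S| ≤ w(S) + |U| + t`, where `t` is the number of strictly comparable pairs in `S`. If `S` is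
not a chain then `2 t + 2 ≤ |S| (|S| - 1)`, which for `|U| = n` and `|S| = n + 1` yields
`2 w(S) ≥ n (n - 1) + 2`; if `S` is a chain, its members have the sizes `0, 1, …, n`.
-/

open Finset

namespace Finset

section PartialOrder
variable {β : Type*} [PartialOrder β] [DecidableLT β] (s : Finset β)

theorem sum_card_filter_lt_eq_card_filter_lt :
    ∑ b ∈ s, #{a ∈ s | a < b} = #{p ∈ s ×ˢ s | p.1 < p.2} := by
  simp_rw [card_filter, sum_product_right]

theorem two_mul_card_filter_lt_add_two_le_card_offDiag [DecidableEq β] {s : Finset β} {a b : β}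
    (ha : a ∈ s) (hb : b ∈ s) (hab : ¬a ≤ b) (hba : ¬b ≤ a) :
    2 * #{p ∈ s ×ˢ s | p.1 < p.2} + 2 ≤ #s.offDiag := by
  set P := {p ∈ s ×ˢ s | p.1 < p.2}
  set Q := {p ∈ s ×ˢ s | p.2 < p.1}
  have hne : a ≠ b := fun h => hab h.le
  have hQ : #Q = #P := by
    refine card_nbij' Prod.swap Prod.swap ?_ ?_ (fun p _ => p.swap_swap)
      (fun p _ => p.swap_swap) <;>
      · intro p
        simp only [P, Q, coe_filter, mem_product, Set.mem_ofPred_eq, Prod.fst_swap, Prod.snd_swap]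
        tauto
  have hPQ : Disjoint P Q := disjoint_filter.2 fun p _ h h' => (h.trans h').false
  have hincomp : Disjoint (P ∪ Q) {(a, b), (b, a)} := by
    have hab' : ¬a < b := fun h => hab h.le
    have hba' : ¬b < a := fun h => hba h.le
    simp [P, Q, hab', hba']
  have hsub : P ∪ Q ∪ {(a, b), (b, a)} ⊆ s.offDiag := by
    intro p
    simp only [mem_union, mem_filter, mem_product, mem_insert, mem_singleton, mem_offDiag, P, Q]
    rintro ((⟨⟨h1, h2⟩, h⟩ | ⟨⟨h1, h2⟩, h⟩) | rfl | rfl)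
    · exact ⟨h1, h2, h.ne⟩
    · exact ⟨h1, h2, h.ne'⟩
    · exact ⟨ha, hb, hne⟩
    · exact ⟨hb, ha, hne.symm⟩
  have hpair : #({(a, b), (b, a)} : Finset (β × β)) = 2 :=
    card_pair (by simp [hne])
  have hle := card_le_card hsub
  rw [card_union_of_disjoint hincomp, card_union_of_disjoint hPQ, hQ, hpair] at hle
  omega

end PartialOrder

section Icc

variable {γ : Type*}

theorem Icc_union_Icc_right [LinearOrder γ] [LocallyFiniteOrder γ] (a b c : γ) :
    Icc a c ∪ Icc b c = Icc (min a b) c := by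
  ext x
  simp only [mem_union, mem_Icc, min_le_iff]
  tauto

theorem Icc_left_injOn [PartialOrder γ] [LocallyFiniteOrder γ] (b : γ) :
    Set.InjOn (fun a => Icc a b) (Set.Iic b) := by
  intro a ha a' ha' (h : Icc a b = Icc a' b)
  exact le_antisymm ((Icc_subset_Icc_iff ha').1 h.ge).1 ((Icc_subset_Icc_iff ha).1 h.le).1

end Icc

end Finset

variable {α : Type*} {S : Finset (Finset α)} {U : Finset α}

def IsSeparating (S : Finset (Finset α)) (U : Finset α) : Prop :=
  ∀ i ∈ U, ∀ j ∈ U, i ≠ j → ∃ A ∈ S, (i ∈ A ∧ j ∉ A) ∨ (j ∈ A ∧ i ∉ A)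

theorem IsSeparating.mono {S' : Finset (Finset α)} (h : IsSeparating S U) (hS : S ⊆ S') :
    IsSeparating S' U := fun i hi j hj hij =>
  let ⟨A, hA, hsep⟩ := h i hi j hj hij
  ⟨A, hS hA, hsep⟩

theorem sum_card_eq_sum_range_of_isChain (hchain : IsChain (· ⊆ ·) (S : Set (Finset α)))
    (hsub : ∀ A ∈ S, A ⊆ U) (hcard : #S = #U + 1) :
    ∑ A ∈ S, #A = ∑ k ∈ range (#U + 1), k := by
  have hinj : Set.InjOn card (S : Set (Finset α)) := by
    intro A hA B hB hAB
    rcases hchain.total hA hB with h | h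
    · exact eq_of_subset_of_card_le h hAB.ge
    · exact (eq_of_subset_of_card_le h hAB.le).symm
  have himage : S.image card = range (#U + 1) := by
    refine eq_of_subset_of_card_le (fun k hk => ?_) ?_
    · obtain ⟨A, hA, rfl⟩ := mem_image.1 hk
      exact mem_range_succ_iff.2 (card_le_card (hsub A hA))
    · rw [card_range, card_image_of_injOn hinj, hcard]
  rw [← himage, sum_image hinj]

section DecidableEq

variable [DecidableEq α]

theorem sum_card_eq_sum_card_filter_mem (hsub : ∀ A ∈ S, A ⊆ U) :
    ∑ A ∈ S, #A = ∑ i ∈ U, #{A ∈ S | i ∈ A} := by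
  simp_rw [card_filter]
  rw [sum_comm]
  refine sum_congr rfl fun A hA => ?_
  rw [← card_filter, filter_mem_eq_inter, inter_eq_right.2 (hsub A hA)]

def maxAvoiding (S : Finset (Finset α)) (i : α) : Finset α := {A ∈ S | i ∉ A}.sup id

theorem notMem_maxAvoiding (S : Finset (Finset α)) (i : α) : i ∉ maxAvoiding S i := by
  simp [maxAvoiding, mem_sup]

theorem subset_maxAvoiding_iff {A : Finset α} {i : α} (hA : A ∈ S) :
    A ⊆ maxAvoiding S i ↔ i ∉ A :=
  ⟨fun h hi => notMem_maxAvoiding S i (h hi),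
    fun hi => le_sup (f := id) (mem_filter.2 ⟨hA, hi⟩)⟩

theorem maxAvoiding_mem (hunion : SupClosed (S : Set (Finset α))) {A : Finset α} {i : α}
    (hA : A ∈ S) (hi : i ∉ A) : maxAvoiding S i ∈ S :=
  hunion.finsetSup_mem ⟨A, mem_filter.2 ⟨hA, hi⟩⟩ fun _ hB => (mem_filter.1 hB).1

theorem maxAvoiding_injOn (hsep : IsSeparating S U) :
    Set.InjOn (maxAvoiding S) U := by
  intro i hi j hj hij
  by_contra hne
  obtain ⟨A, hA, ⟨hiA, hjA⟩ | ⟨hjA, hiA⟩⟩ := hsep i hi j hj hne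
  · exact (subset_maxAvoiding_iff hA).1 (hij ▸ (subset_maxAvoiding_iff hA).2 hjA) hiA
  · exact (subset_maxAvoiding_iff hA).1 (hij ▸ (subset_maxAvoiding_iff hA).2 hiA) hjA

theorem card_filter_notMem_le (S : Finset (Finset α)) (i : α) :
    #{A ∈ S | i ∉ A} ≤ #{A ∈ S | A ⊂ maxAvoiding S i} + 1 := by
  calc #{A ∈ S | i ∉ A} = #{A ∈ S | A ⊆ maxAvoiding S i} :=
        congrArg card (filter_congr fun A hA => (subset_maxAvoiding_iff hA).symm)
    _ ≤ #(insert (maxAvoiding S i) {A ∈ S | A ⊂ maxAvoiding S i}) := by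
        refine card_le_card fun A hA => ?_
        rw [mem_filter] at hA
        rw [mem_insert, mem_filter]
        rcases hA.2.eq_or_ssubset with h | h
        · exact .inl h
        · exact .inr ⟨hA.1, h⟩
    _ ≤ _ := card_insert_le _ _

theorem sum_card_filter_notMem_le (hunion : SupClosed (S : Set (Finset α)))
    (hsep : IsSeparating S U) :
    ∑ i ∈ U, #{A ∈ S | i ∉ A} ≤ #{p ∈ S ×ˢ S | p.1 ⊂ p.2} + #U := by
  have himage :
      ∑ B ∈ U.image (maxAvoiding S), #{A ∈ S | A ⊂ B} ≤ ∑ B ∈ S, #{A ∈ S | A ⊂ B} := by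
    refine sum_le_sum_of_ne_zero fun B hB hne => ?_
    obtain ⟨i, -, rfl⟩ := mem_image.1 hB
    obtain ⟨A, hA⟩ := card_ne_zero.1 hne
    rw [mem_filter] at hA
    exact maxAvoiding_mem hunion hA.1 ((subset_maxAvoiding_iff hA.1).1 hA.2.subset)
  calc ∑ i ∈ U, #{A ∈ S | i ∉ A} ≤ ∑ i ∈ U, (#{A ∈ S | A ⊂ maxAvoiding S i} + 1) :=
        sum_le_sum fun i _ => card_filter_notMem_le S i
    _ = ∑ B ∈ U.image (maxAvoiding S), #{A ∈ S | A ⊂ B} + #U := by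
        rw [sum_add_distrib, sum_image (maxAvoiding_injOn hsep), card_eq_sum_ones]
    _ ≤ #{p ∈ S ×ˢ S | p.1 ⊂ p.2} + #U := by
        rw [← sum_card_filter_lt_eq_card_filter_lt]
        exact Nat.add_le_add_right himage _

theorem sum_card_add_sum_card_filter_notMem (hsub : ∀ A ∈ S, A ⊆ U) :
    ∑ A ∈ S, #A + ∑ i ∈ U, #{A ∈ S | i ∉ A} = #U * #S := by
  rw [sum_card_eq_sum_card_filter_mem hsub, ← sum_add_distrib, ← smul_eq_mul, ← sum_const]
  exact sum_congr rfl fun i _ => card_filter_add_card_filter_not _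

theorem card_mul_card_le_sum_card_add (hsub : ∀ A ∈ S, A ⊆ U)
    (hunion : SupClosed (S : Set (Finset α)))
    (hsep : IsSeparating S U) :
    #U * #S ≤ ∑ A ∈ S, #A + #{p ∈ S ×ˢ S | p.1 ⊂ p.2} + #U := by
  rw [← sum_card_add_sum_card_filter_notMem hsub, add_assoc]
  exact Nat.add_le_add_left (sum_card_filter_notMem_le hunion hsep) _

theorem mul_pred_lt_two_mul_sum_card (hU : U.Nonempty) (hsub : ∀ A ∈ S, A ⊆ U)
    (hunion : SupClosed (S : Set (Finset α)))
    (hsep : IsSeparating S U)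
    (hcard : #S = #U + 1) :
    #U * (#U - 1) < 2 * ∑ A ∈ S, #A := by
  obtain ⟨n, hn⟩ : ∃ n, #U = n + 1 := Nat.exists_eq_add_one.2 hU.card_pos
  by_cases hchain : IsChain (· ⊆ ·) (S : Set (Finset α))
  · have h := sum_range_id_mul_two (#U + 1)
    rw [← sum_card_eq_sum_range_of_isChain hchain hsub hcard, hn] at h
    simp only [hn, Nat.add_sub_cancel] at h ⊢
    nlinarith
  · obtain ⟨A, hA, B, hB, -, hAB, hBA⟩ : ∃ A ∈ S, ∃ B ∈ S, A ≠ B ∧ ¬A ⊆ B ∧ ¬B ⊆ A := by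
      simpa [IsChain, Set.Pairwise] using hchain
    have hpairs := two_mul_card_filter_lt_add_two_le_card_offDiag hA hB hAB hBA
    have hmain := card_mul_card_le_sum_card_add hsub hunion hsep
    rw [offDiag_card, ← Nat.mul_sub_one, hcard, hn] at hpairs
    rw [hcard, hn] at hmain
    simp only [hn, Nat.add_sub_cancel] at hpairs ⊢
    nlinarith

end DecidableEq

def staircase (n : ℕ) : Finset (Finset ℕ) := (Icc 2 n).image fun k => Icc k n

theorem mem_staircase {n : ℕ} {A : Finset ℕ} : A ∈ staircase n ↔ ∃ k ∈ Icc 2 n, Icc k n = A :=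
  mem_image

theorem card_staircase (n : ℕ) : #(staircase n) = n - 1 := by
  rw [staircase,
    card_image_of_injOn fun k hk l hl => Icc_left_injOn n (mem_Icc.1 hk).2 (mem_Icc.1 hl).2,
    Nat.card_Icc]
  omega

theorem sum_card_staircase (n : ℕ) : ∑ A ∈ staircase n, #A = ∑ i ∈ range n, i := by
  rw [staircase, sum_image fun k hk l hl => Icc_left_injOn n (mem_Icc.1 hk).2 (mem_Icc.1 hl).2]
  refine sum_bij_ne_zero (fun k _ _ => n + 1 - k) ?_ ?_ ?_ fun k _ _ => Nat.card_Icc k n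
  · intro k hk _
    rw [mem_Icc] at hk
    exact mem_range.2 (by omega)
  · intro k hk _ l hl _ h
    rw [mem_Icc] at hk hl
    omega
  · intro j hj _
    rw [mem_range] at hj
    refine ⟨n + 1 - j, mem_Icc.2 ⟨by omega, by omega⟩, ?_, by omega⟩
    rw [Nat.card_Icc]
    omega

theorem empty_notMem_staircase (n : ℕ) : ∅ ∉ staircase n := fun h => by
  obtain ⟨k, hk, hk0⟩ := mem_staircase.1 h
  exact (nonempty_Icc.2 (mem_Icc.1 hk).2).ne_empty hk0

theorem singleton_pred_notMem_staircase {n : ℕ} (hn : 1 ≤ n) : {n - 1} ∉ staircase n := by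
  intro h
  obtain ⟨k, hk, hkn⟩ := mem_staircase.1 h
  have hmem : n ∈ Icc k n := right_mem_Icc.2 (mem_Icc.1 hk).2
  rw [hkn, mem_singleton] at hmem
  omega

theorem union_mem_staircase {n : ℕ} {A B : Finset ℕ} (hA : A ∈ staircase n)
    (hB : B ∈ staircase n) : A ∪ B ∈ staircase n := by
  obtain ⟨k, hk, rfl⟩ := mem_staircase.1 hA
  obtain ⟨l, hl, rfl⟩ := mem_staircase.1 hB
  rw [Icc_union_Icc_right]
  exact mem_staircase.2 ⟨min k l, by simp_all, rfl⟩

theorem insert_pred_mem_staircase {n : ℕ} (hn : 3 ≤ n) {A : Finset ℕ}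
    (hA : A ∈ staircase n) : insert (n - 1) A ∈ staircase n := by
  obtain ⟨k, hk, rfl⟩ := mem_staircase.1 hA
  refine mem_staircase.2 ⟨min k (n - 1), ?_, ?_⟩
  · simp only [mem_Icc] at hk ⊢; omega
  · ext; simp only [mem_insert, mem_Icc] at hk ⊢; omega

theorem isSeparating_staircase (n : ℕ) : IsSeparating (staircase n) (Icc 1 n) := by
  intro i hi j hj hij
  simp only [mem_Icc] at hi hj
  rcases hij.lt_or_gt with h | h
  · refine ⟨Icc j n, mem_staircase.2 ⟨j, ?_, rfl⟩, .inr ⟨?_, ?_⟩⟩ <;> simp only [mem_Icc] <;> omega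
  · refine ⟨Icc i n, mem_staircase.2 ⟨i, ?_, rfl⟩, .inl ⟨?_, ?_⟩⟩ <;> simp only [mem_Icc] <;> omega

def extremalFamily (n : ℕ) : Finset (Finset ℕ) := insert ∅ (insert {n - 1} (staircase n))

theorem subset_Icc_of_mem_extremalFamily {n : ℕ} (hn : 2 ≤ n) {A : Finset ℕ}
    (hA : A ∈ extremalFamily n) : A ⊆ Icc 1 n := by
  simp only [extremalFamily, mem_insert] at hA
  rcases hA with rfl | rfl | hA
  · exact empty_subset _
  · simp only [singleton_subset_iff, mem_Icc]; omega
  · obtain ⟨k, hk, rfl⟩ := mem_staircase.1 hA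
    exact Icc_subset_Icc (by simp only [mem_Icc] at hk; omega) le_rfl

theorem union_mem_extremalFamily {n : ℕ} (hn : 3 ≤ n) {A B : Finset ℕ}
    (hA : A ∈ extremalFamily n) (hB : B ∈ extremalFamily n) : A ∪ B ∈ extremalFamily n := by
  simp only [extremalFamily, mem_insert] at hA hB ⊢
  rcases hA with rfl | rfl | hA <;> rcases hB with rfl | rfl | hB
  all_goals simp_all [union_mem_staircase, insert_pred_mem_staircase hn]

theorem card_extremalFamily {n : ℕ} (hn : 1 ≤ n) : #(extremalFamily n) = n + 1 := by
  rw [extremalFamily, card_insert_of_notMem, card_insert_of_notMem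
    (singleton_pred_notMem_staircase hn), card_staircase]
  · omega
  · simp [empty_notMem_staircase]

theorem sum_card_extremalFamily {n : ℕ} (hn : 1 ≤ n) :
    ∑ A ∈ extremalFamily n, #A = n * (n - 1) / 2 + 1 := by
  rw [extremalFamily, sum_insert, sum_insert (singleton_pred_notMem_staircase hn),
    sum_card_staircase, sum_range_id]
  · simp [add_comm]
  · simp [empty_notMem_staircase]

/-- For `n ≥ 3`: every separating union-closed family on `[n]` with exactly
`n+1` members has weight at least `n(n-1)/2 + 1`, and the family
`T_n ∪ {∅} ∪ {{n-1}}` attains this bound: it is a separating union-closed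
family on `[n]` of size `n+1` with weight exactly `n(n-1)/2 + 1`. -/
theorem separating_unionClosed_size_succ_weight (n : ℕ) (hn : 3 ≤ n) :
    (∀ S : Finset (Finset ℕ),
      (∀ A ∈ S, A ⊆ Finset.Icc 1 n) →
      (∀ A ∈ S, ∀ B ∈ S, A ∪ B ∈ S) →
      (∀ i ∈ Finset.Icc 1 n, ∀ j ∈ Finset.Icc 1 n, i ≠ j →
        ∃ A ∈ S, (i ∈ A ∧ j ∉ A) ∨ (j ∈ A ∧ i ∉ A)) →
      S.card = n + 1 →
      n * (n - 1) / 2 + 1 ≤ ∑ A ∈ S, A.card) ∧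
    (let T : Finset (Finset ℕ) :=
        insert ∅ (insert {n - 1} ((Finset.Icc 2 n).image (fun k => Finset.Icc k n)));
      (∀ A ∈ T, A ⊆ Finset.Icc 1 n) ∧
      (∀ A ∈ T, ∀ B ∈ T, A ∪ B ∈ T) ∧
      (∀ i ∈ Finset.Icc 1 n, ∀ j ∈ Finset.Icc 1 n, i ≠ j →
        ∃ A ∈ T, (i ∈ A ∧ j ∉ A) ∨ (j ∈ A ∧ i ∉ A)) ∧
      T.card = n + 1 ∧
      ∑ A ∈ T, A.card = n * (n - 1) / 2 + 1) := by
  refine ⟨fun S hsub hunion hsep hcard => ?_, ?_⟩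
  · have h := mul_pred_lt_two_mul_sum_card (nonempty_Icc.2 (by omega)) hsub
      (fun A hA B hB => hunion A hA B hB) hsep
      (by rw [hcard, Nat.card_Icc, Nat.add_sub_cancel])
    rw [Nat.card_Icc, Nat.add_sub_cancel] at h
    exact Nat.div_lt_of_lt_mul h
  · refine ⟨fun A hA => subset_Icc_of_mem_extremalFamily (by omega) hA,
      fun A hA B hB => union_mem_extremalFamily hn hA hB,
      (isSeparating_staircase n).mono ((subset_insert _ _).trans (subset_insert _ _)),
      card_extremalFamily (by omega), sum_card_extremalFamily (by omega)⟩
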